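/- arXiv:2508.00133 — 5 statements merged into one kernel-verified Lean document; each statement's English description precedes it below -/
import Mathlib

section
/- Existence of (d_H − ℒ)-closed developments: In the abstract variational bicomplex, let ℒ be an operator of bidegree (0,0) with ℒ∘ℒ = 0, ℒ∘d_H + d_H∘ℒ = 0 and ℒ∘d_V + d_V∘ℒ = 0 (modelling the Lie derivative along a degree 1 cohomological vector field Q). Let ω ∈ Ω^{2,n} satisfy d_V ω = 0 and Π(ℒω) = 0. Define ω^k := (d_V∘h_V∘h^∇∘ℒ)^k ω ∈ Ω^{2,n−k} and ω• := Σ_{k=0}^{n} ω^k. Then ℒω^k = d_H ω^{k+1} for every k ≥ 0 (with ω^{n+1} := 0), and consequently the development ω• satisfies d_V ω• = 0 and (d_H − ℒ) ω• = 0, and its component in Ω^{2,n} equals ω. -/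
/-- **Existence of `(d_H − ℒ)`-closed developments** in the abstract variational bicomplex:
given `ω ∈ Ω^{2,n}` with `d_V ω = 0` and `IE(ℒω) = 0`, the forms
`ω^k := (d_V∘h_V∘h^∇∘ℒ)^k ω` satisfy `ℒ ω^k = d_H ω^{k+1}` for all `k ≥ 0`, and the
development `ω• = Σ_{k=0}^{n} ω^k` is `d_V`-closed and `(d_H − ℒ)`-closed, with component
in `Ω^{2,n}` equal to `ω`. -/
theorem closed_development_exists
    {R M : Type*} [CommRing R] [AddCommGroup M] [Module R M]
    -- the abstract variational bicomplex
    (n : ℤ) (Ω : ℤ → ℤ → Submodule R M)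
    (hint : DirectSum.IsInternal fun pq : ℤ × ℤ => Ω pq.1 pq.2)
    (hvan : ∀ p q : ℤ, (p < 0 ∨ q < 0 ∨ n < q) → Ω p q = ⊥)
    (dV dH : Module.End R M)
    (hdVdeg : ∀ p q : ℤ, ∀ x ∈ Ω p q, dV x ∈ Ω (p + 1) q)
    (hdHdeg : ∀ p q : ℤ, ∀ x ∈ Ω p q, dH x ∈ Ω p (q + 1))
    (hdV2 : dV * dV = 0) (hdH2 : dH * dH = 0)
    (hdVdH : dV * dH + dH * dV = 0)
    -- the vertical homotopy h_V and the projection π₀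
    (hV π₀ : Module.End R M)
    (hhVdeg : ∀ p q : ℤ, ∀ x ∈ Ω p q, hV x ∈ Ω (p - 1) q)
    (hπ₀deg : ∀ p q : ℤ, ∀ x ∈ Ω p q, π₀ x ∈ Ω p q)
    (hπ₀van : ∀ p q : ℤ, 1 ≤ p → ∀ x ∈ Ω p q, π₀ x = 0)
    (hVhom : dV * hV + hV * dV + π₀ = 1)
    (hVdH : hV * dH + dH * hV = 0)
    -- the horizontal homotopy h^∇ and interior Euler operator IE, on vertical degree ≥ 1
    (hNabla IE : Module.End R M)
    (hNabladeg : ∀ p q : ℤ, ∀ x ∈ Ω p q, hNabla x ∈ Ω p (q - 1))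
    (hIEdeg : ∀ p q : ℤ, ∀ x ∈ Ω p q, IE x ∈ Ω p q)
    (hIEvan : ∀ p q : ℤ, 1 ≤ p → q < n → ∀ x ∈ Ω p q, IE x = 0)
    (hHhom : ∀ p q : ℤ, 1 ≤ p → ∀ x ∈ Ω p q, dH (hNabla x) + hNabla (dH x) + IE x = x)
    -- the operator ℒ (the Lie derivative along a cohomological vector field)
    (L : Module.End R M)
    (hLdeg : ∀ p q : ℤ, ∀ x ∈ Ω p q, L x ∈ Ω p q)
    (hL2 : L * L = 0)
    (hLdH : L * dH + dH * L = 0)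
    (hLdV : L * dV + dV * L = 0)
    -- the data ω
    (ω : M) (hω : ω ∈ Ω 2 n) (hdVω : dV ω = 0) (hIELω : IE (L ω) = 0) :
    (let ωk : ℕ → M := fun k => ((dV * hV * hNabla * L) ^ k) ω
     let ωdev : M := ∑ k ∈ Finset.range (n.toNat + 1), ωk k
     -- ω^k ∈ Ω^{2,n−k}
     (∀ k : ℕ, ωk k ∈ Ω 2 (n - k)) ∧
     -- ℒ ω^k = d_H ω^{k+1} for every k ≥ 0
     (∀ k : ℕ, L (ωk k) = dH (ωk (k + 1))) ∧
     -- the development is d_V-closed and (d_H − ℒ)-closed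
     dV ωdev = 0 ∧
     (dH - L) ωdev = 0 ∧
     -- the component in Ω^{2,n} is ω itself
     ωk 0 = ω) := by
  intro ωk ωdev
  have hωk0 : ωk 0 = ω := by simp [ωk]
  have hstep : ∀ k : ℕ, ωk (k + 1) = dV (hV (hNabla (L (ωk k)))) := by
    intro k
    show ((dV * hV * hNabla * L) ^ (k + 1)) ω = _
    rw [pow_succ']
    rfl
  have app2 : ∀ f g : Module.End R M, f * g + g * f = 0 → ∀ x, f (g x) = -g (f x) := by
    intro f g h x
    have h' := LinearMap.congr_fun h x
    simp only [LinearMap.add_apply, Module.End.mul_apply, LinearMap.zero_apply] at h'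
    exact eq_neg_of_add_eq_zero_left h'
  have flip : ∀ f g : Module.End R M, f * g + g * f = 0 → g * f + f * g = 0 := by
    intro f g h; rw [add_comm]; exact h
  have hdV2' : ∀ y, dV (dV y) = 0 := by
    intro y
    have := LinearMap.congr_fun hdV2 y
    simpa using this
  have hL2' : ∀ y, L (L y) = 0 := by
    intro y
    have := LinearMap.congr_fun hL2 y
    simpa using this
  have hΩbot : ∀ p q : ℤ, (p < 0 ∨ q < 0 ∨ n < q) → ∀ x ∈ Ω p q, x = 0 := by
    intro p q h x hx
    rw [hvan p q h] at hx
    simpa using hx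
  have hdeg : ∀ k : ℕ, ωk k ∈ Ω 2 (n - k) := by
    intro k
    induction k with
    | zero => simpa [hωk0] using hω
    | succ k ih =>
      have h1 := hLdeg 2 (n - k) _ ih
      have h2 := hNabladeg 2 (n - k) _ h1
      have h3 := hhVdeg 2 (n - k - 1) _ h2
      have h4 := hdVdeg (2 - 1) (n - k - 1) _ h3
      rw [hstep k]
      have e : (n - (k + 1 : ℕ) : ℤ) = n - k - 1 := by push_cast; ring
      rw [e]
      norm_num at h4
      exact h4
  have hdVωk : ∀ k, dV (ωk k) = 0 := by
    intro k
    cases k with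
    | zero => rw [hωk0]; exact hdVω
    | succ k => rw [hstep]; exact hdV2' _
  have hdHω : dH ω = 0 := hΩbot 2 (n + 1) (by omega) _ (hdHdeg 2 n ω hω)
  have core : ∀ k : ℕ, dH (L (ωk k)) = 0 → IE (L (ωk k)) = 0 →
      dH (ωk (k + 1)) = L (ωk k) := by
    intro k hdHL hIEL
    have hxmem : L (ωk k) ∈ Ω 2 (n - k) := hLdeg _ _ _ (hdeg k)
    have hH := hHhom 2 (n - k) (by norm_num) _ hxmem
    rw [hdHL, hIEL, map_zero, add_zero, add_zero] at hH
    have hdVx : dV (L (ωk k)) = 0 := by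
      rw [app2 dV L (flip L dV hLdV), hdVωk k, map_zero, neg_zero]
    have hπ : π₀ (L (ωk k)) = 0 := hπ₀van 2 (n - k) one_le_two _ hxmem
    have hVh := LinearMap.congr_fun hVhom (L (ωk k))
    simp only [LinearMap.add_apply, Module.End.mul_apply, Module.End.one_apply] at hVh
    rw [hdVx, map_zero, hπ, add_zero, add_zero] at hVh
    calc dH (ωk (k + 1)) = dH (dV (hV (hNabla (L (ωk k))))) := by rw [hstep]
    _ = -dV (dH (hV (hNabla (L (ωk k))))) := by
        rw [app2 dH dV (flip dV dH hdVdH)]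
    _ = -dV (-hV (dH (hNabla (L (ωk k))))) := by
        rw [app2 dH hV (flip hV dH hVdH)]
    _ = dV (hV (dH (hNabla (L (ωk k))))) := by rw [map_neg, neg_neg]
    _ = dV (hV (L (ωk k))) := by rw [hH]
    _ = L (ωk k) := hVh
  have Q : ∀ k : ℕ, L (ωk k) = dH (ωk (k + 1)) := by
    intro k
    induction k with
    | zero =>
      refine (core 0 ?_ ?_).symm
      · rw [hωk0, app2 dH L (flip L dH hLdH), hdHω, map_zero, neg_zero]
      · rw [hωk0]; exact hIELω
    | succ k ih =>
      refine (core (k + 1) ?_ ?_).symm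
      · rw [app2 dH L (flip L dH hLdH), ← ih, hL2', neg_zero]
      · exact hIEvan 2 (n - (k + 1 : ℕ)) one_le_two (by push_cast; omega) _
          (hLdeg _ _ _ (hdeg (k + 1)))
  have hNzero : ωk (n.toNat + 1) = 0 :=
    hΩbot 2 (n - (n.toNat + 1 : ℕ)) (by right; left; push_cast; omega) _ (hdeg (n.toNat + 1))
  refine ⟨hdeg, Q, ?_, ?_, hωk0⟩
  · show dV (∑ k ∈ Finset.range (n.toNat + 1), ωk k) = 0
    rw [map_sum]
    exact Finset.sum_eq_zero fun k _ => hdVωk k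
  · show (dH - L) (∑ k ∈ Finset.range (n.toNat + 1), ωk k) = 0
    rw [LinearMap.sub_apply, map_sum, map_sum, ← Finset.sum_sub_distrib]
    have : ∀ k ∈ Finset.range (n.toNat + 1),
        dH (ωk k) - L (ωk k) = dH (ωk k) - dH (ωk (k + 1)) := by
      intro k _; rw [Q k]
    rw [Finset.sum_congr rfl this, Finset.sum_range_sub' (fun k => dH (ωk k))]
    rw [hωk0, hdHω, hNzero, map_zero, sub_zero]
end

section
/- Classification of canonical Hamiltonian triples: In the abstract variational bicomplex with contraction, let ω ∈ ⊕_q Ω^{2,q} satisfy d_V ω = 0, and define θ := h_V ω ∈ ⊕_q Ω^{1,q} and L := h_V(ι ω − d_H θ) ∈ ⊕_q Ω^{0,q}. Then the following are equivalent: (1) (d_H − ℒ) ω = 0, where ℒ := ι∘d_V − d_V∘ι; (2) d_V θ = ω and ι ω = d_V L + d_H θ, i.e. (L, θ) is a Hamiltonian triple for ω. -/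
/-- **Classification of canonical Hamiltonian triples**: in the abstract variational
bicomplex with contraction `ι`, for `ω ∈ ⊕_q Ω^{2,q}` with `d_V ω = 0`, setting
`θ := h_V ω` and `L := h_V(ι ω − d_H θ)`, the development `ω` is `(d_H − ℒ)`-closed
(where `ℒ = ι∘d_V − d_V∘ι`) if and only if `(L, θ)` is a Hamiltonian triple for `ω`,
i.e. `d_V θ = ω` and `ι ω = d_V L + d_H θ`. -/
theorem classification_of_canonical_hamiltonian_triples
    {R M : Type*} [CommRing R] [AddCommGroup M] [Module R M]
    -- the abstract variational bicomplex
    (n : ℤ) (Ω : ℤ → ℤ → Submodule R M)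
    (hint : DirectSum.IsInternal fun pq : ℤ × ℤ => Ω pq.1 pq.2)
    (hvan : ∀ p q : ℤ, (p < 0 ∨ q < 0 ∨ n < q) → Ω p q = ⊥)
    (dV dH : Module.End R M)
    (hdVdeg : ∀ p q : ℤ, ∀ x ∈ Ω p q, dV x ∈ Ω (p + 1) q)
    (hdHdeg : ∀ p q : ℤ, ∀ x ∈ Ω p q, dH x ∈ Ω p (q + 1))
    (hdV2 : dV * dV = 0) (hdH2 : dH * dH = 0)
    (hdVdH : dV * dH + dH * dV = 0)
    -- the contraction operator ι
    (ι : Module.End R M)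
    (hιdeg : ∀ p q : ℤ, ∀ x ∈ Ω p q, ι x ∈ Ω (p - 1) q)
    (hιdH : ι * dH = dH * ι)
    -- the vertical homotopy h_V and the projection π₀
    (hV π₀ : Module.End R M)
    (hhVdeg : ∀ p q : ℤ, ∀ x ∈ Ω p q, hV x ∈ Ω (p - 1) q)
    (hπ₀deg : ∀ p q : ℤ, ∀ x ∈ Ω p q, π₀ x ∈ Ω p q)
    (hπ₀van : ∀ p q : ℤ, 1 ≤ p → ∀ x ∈ Ω p q, π₀ x = 0)
    (hVhom : dV * hV + hV * dV + π₀ = 1)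
    -- the data ω
    (ω : M) (hω : ω ∈ ⨆ q : ℤ, Ω 2 q) (hdVω : dV ω = 0) :
    (let lie : Module.End R M := ι * dV - dV * ι
     let θ : M := hV ω
     let L : M := hV (ι ω - dH θ)
     ((dH - lie) ω = 0) ↔ (dV θ = ω ∧ ι ω = dV L + dH θ)) := by
  intro lie θ L
  -- π₀ kills anything of vertical degree p ≥ 1
  have key : ∀ p : ℤ, 1 ≤ p → ∀ x ∈ ⨆ q : ℤ, Ω p q, π₀ x = 0 := by
    intro p hp x hx
    refine Submodule.iSup_induction (motive := fun y => π₀ y = 0) _ hx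
      (fun q y hy => hπ₀van p q hp y hy) (map_zero π₀)
      (fun a b ha hb => show π₀ (a + b) = 0 by
        rw [map_add, show π₀ a = 0 from ha, show π₀ b = 0 from hb, add_zero])
  -- pushing memberships through degree-homogeneous maps
  have mapmem : ∀ (f : Module.End R M) (p p' : ℤ),
      (∀ q : ℤ, ∀ x ∈ Ω p q, f x ∈ ⨆ q' : ℤ, Ω p' q') →
      ∀ x ∈ ⨆ q : ℤ, Ω p q, f x ∈ ⨆ q' : ℤ, Ω p' q' := by
    intro f p p' hf x hx
    refine Submodule.iSup_induction (motive := fun y => f y ∈ ⨆ q' : ℤ, Ω p' q') _ hx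
      (fun q y hy => hf q y hy)
      (show f 0 ∈ _ by rw [map_zero]; exact zero_mem _)
      (fun a b ha hb => show f (a + b) ∈ _ by rw [map_add]; exact add_mem ha hb)
  have hθmem : θ ∈ ⨆ q : ℤ, Ω 1 q :=
    mapmem hV 2 1 (fun q x hx => Submodule.mem_iSup_of_mem q
      (by simpa using hhVdeg 2 q x hx)) ω hω
  have hιωmem : ι ω ∈ ⨆ q : ℤ, Ω 1 q :=
    mapmem ι 2 1 (fun q x hx => Submodule.mem_iSup_of_mem q
      (by simpa using hιdeg 2 q x hx)) ω hω
  have hdHθmem : dH θ ∈ ⨆ q : ℤ, Ω 1 q :=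
    mapmem dH 1 1 (fun q x hx => Submodule.mem_iSup_of_mem (q + 1)
      (hdHdeg 1 q x hx)) θ hθmem
  -- the homotopy identity applied to ω gives d_V θ = ω
  have hπω : π₀ ω = 0 := key 2 (by norm_num) ω hω
  have h1 := LinearMap.congr_fun hVhom ω
  simp only [LinearMap.add_apply, Module.End.mul_apply, Module.End.one_apply, hdVω,
    map_zero, hπω, add_zero] at h1
  -- h1 : dV (hV ω) = ω
  set α : M := ι ω - dH θ with hα
  have hαmem : α ∈ ⨆ q : ℤ, Ω 1 q := sub_mem hιωmem hdHθmem
  have hπα : π₀ α = 0 := key 1 le_rfl α hαmem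
  have h2 := LinearMap.congr_fun hVhom α
  simp only [LinearMap.add_apply, Module.End.mul_apply, Module.End.one_apply, hπα,
    add_zero] at h2
  -- h2 : dV (hV α) + hV (dV α) = α
  have hcomm := LinearMap.congr_fun hdVdH θ
  simp only [LinearMap.add_apply, Module.End.mul_apply, LinearMap.zero_apply] at hcomm
  -- hcomm : dV (dH θ) + dH (dV θ) = 0
  have h1' : dV θ = ω := h1
  have hdVα : dV α = (dH - lie) ω := by
    rw [h1'] at hcomm
    have hc : dV (dH θ) = -dH ω := eq_neg_of_add_eq_zero_left hcomm
    show dV (ι ω - dH θ) = (dH - lie) ω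
    rw [map_sub, hc]
    show dV (ι ω) - -dH ω = (dH - (ι * dV - dV * ι)) ω
    simp only [LinearMap.sub_apply, Module.End.mul_apply, hdVω, map_zero]
    abel
  constructor
  · intro hclosed
    refine ⟨h1', ?_⟩
    have hz : dV α = 0 := by rw [hdVα, hclosed]
    have h3 : dV L = α := by
      have h2' := h2
      rw [hz, map_zero, add_zero] at h2'
      exact h2'
    rw [h3, hα]
    abel
  · rintro ⟨-, hham⟩
    have h3 : α = dV L := by rw [hα, hham]; abel
    have : dV α = 0 := by rw [h3]; exact LinearMap.congr_fun hdV2 L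
    rw [hdVα] at this
    exact this
end

section
/- Modified classical master equation: In the abstract variational bicomplex with contraction satisfying 2ι∘d_V∘ι = d_V∘ι∘ι + ι∘ι∘d_V (encoding [Q,Q] = 0), let ω ∈ ⊕_q Ω^{2,q} with d_V ω = 0, and let (L, θ) be a Hamiltonian triple for ω (d_V θ = ω and ι ω = d_V L + d_H θ). Assume moreover π₀(ι ι ω) = 0 and π₀(d_H L) = 0. Then ι ι ω = 2 d_H L, i.e. L satisfies the modified classical master equation (1/2) ι_Q ι_Q ω = d_H L. -/
private lemma iSup_apply_eq_zero {R M : Type*} [CommRing R] [AddCommGroup M] [Module R M]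
    (Ω : ℤ → Submodule R M) (f : Module.End R M) (h : ∀ q : ℤ, ∀ x ∈ Ω q, f x = 0)
    {x : M} (hx : x ∈ ⨆ q : ℤ, Ω q) : f x = 0 := by
  refine Submodule.iSup_induction (motive := fun y => f y = 0) Ω hx h (map_zero f) ?_
  intro y z hy hz
  rw [map_add, hy, hz, add_zero]

private lemma iSup_apply_mem {R M : Type*} [CommRing R] [AddCommGroup M] [Module R M]
    (Ω : ℤ → Submodule R M) (f : Module.End R M) (S : Submodule R M)
    (h : ∀ q : ℤ, ∀ x ∈ Ω q, f x ∈ S)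
    {x : M} (hx : x ∈ ⨆ q : ℤ, Ω q) : f x ∈ S := by
  refine Submodule.iSup_induction (motive := fun y => f y ∈ S) Ω hx h ?_ ?_
  · show f 0 ∈ S
    rw [map_zero]; exact S.zero_mem
  · intro y z hy hz
    rw [map_add]; exact S.add_mem hy hz

/-- **Modified classical master equation**: in the abstract variational bicomplex with
contraction `ι` satisfying `2ι∘d_V∘ι = d_V∘ι∘ι + ι∘ι∘d_V` (encoding `[Q,Q] = 0`), if
`(L, θ)` is a Hamiltonian triple for a `d_V`-closed `ω ∈ ⊕_q Ω^{2,q}`, and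
`π₀(ι ι ω) = 0` and `π₀(d_H L) = 0`, then `ι ι ω = 2 d_H L`. -/
theorem modified_classical_master_equation
    {R M : Type*} [CommRing R] [Invertible (2 : R)] [AddCommGroup M] [Module R M]
    -- the abstract variational bicomplex
    (n : ℤ) (Ω : ℤ → ℤ → Submodule R M)
    (hint : DirectSum.IsInternal fun pq : ℤ × ℤ => Ω pq.1 pq.2)
    (hvan : ∀ p q : ℤ, (p < 0 ∨ q < 0 ∨ n < q) → Ω p q = ⊥)
    (dV dH : Module.End R M)
    (hdVdeg : ∀ p q : ℤ, ∀ x ∈ Ω p q, dV x ∈ Ω (p + 1) q)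
    (hdHdeg : ∀ p q : ℤ, ∀ x ∈ Ω p q, dH x ∈ Ω p (q + 1))
    (hdV2 : dV * dV = 0) (hdH2 : dH * dH = 0)
    (hdVdH : dV * dH + dH * dV = 0)
    -- the contraction operator ι
    (ι : Module.End R M)
    (hιdeg : ∀ p q : ℤ, ∀ x ∈ Ω p q, ι x ∈ Ω (p - 1) q)
    (hιdH : ι * dH = dH * ι)
    (hQQ : 2 • (ι * dV * ι) = dV * ι * ι + ι * ι * dV)
    -- the vertical homotopy h_V and the projection π₀
    (hV π₀ : Module.End R M)
    (hhVdeg : ∀ p q : ℤ, ∀ x ∈ Ω p q, hV x ∈ Ω (p - 1) q)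
    (hπ₀deg : ∀ p q : ℤ, ∀ x ∈ Ω p q, π₀ x ∈ Ω p q)
    (hπ₀van : ∀ p q : ℤ, 1 ≤ p → ∀ x ∈ Ω p q, π₀ x = 0)
    (hVhom : dV * hV + hV * dV + π₀ = 1)
    -- ω and the Hamiltonian triple (L, θ)
    (ω L θ : M)
    (hω : ω ∈ ⨆ q : ℤ, Ω 2 q) (hL : L ∈ ⨆ q : ℤ, Ω 0 q) (hθ : θ ∈ ⨆ q : ℤ, Ω 1 q)
    (hdVω : dV ω = 0)
    (htriple₁ : dV θ = ω) (htriple₂ : ι ω = dV L + dH θ)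
    -- the extra vanishing assumptions
    (hπιιω : π₀ (ι (ι ω)) = 0) (hπdHL : π₀ (dH L) = 0) :
    ι (ι ω) = 2 • dH L := by
  set x : M := ι (ι ω) - 2 • dH L with hxdef
  -- membership facts
  have hιω : ι ω ∈ ⨆ q : ℤ, Ω 1 q := by
    refine iSup_apply_mem (Ω 2) ι _ (fun q y hy => ?_) hω
    have := hιdeg 2 q y hy
    exact Submodule.mem_iSup_of_mem q (by norm_num at this ⊢; exact this)
  have hιιω : ι (ι ω) ∈ ⨆ q : ℤ, Ω 0 q := by
    refine iSup_apply_mem (Ω 1) ι _ (fun q y hy => ?_) hιω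
    have := hιdeg 1 q y hy
    exact Submodule.mem_iSup_of_mem q (by norm_num at this ⊢; exact this)
  have hdHL : dH L ∈ ⨆ q : ℤ, Ω 0 q := by
    refine iSup_apply_mem (Ω 0) dH _ (fun q y hy => ?_) hL
    exact Submodule.mem_iSup_of_mem (q + 1) (hdHdeg 0 q y hy)
  have hx : x ∈ ⨆ q : ℤ, Ω 0 q := by
    refine Submodule.sub_mem _ hιιω ?_
    rw [two_smul]; exact Submodule.add_mem _ hdHL hdHL
  -- step 1 : dV (ι ω) = -(dH ω)
  have hdVιω : dV (ι ω) = -(dH ω) := by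
    have h1 : dV (dV L) = 0 := by
      have := congrArg (fun f : Module.End R M => f L) hdV2; simpa using this
    have h2 : dV (dH θ) + dH (dV θ) = 0 := by
      have := congrArg (fun f : Module.End R M => f θ) hdVdH; simpa using this
    rw [htriple₁] at h2
    rw [htriple₂, map_add, h1, zero_add]
    exact eq_neg_of_add_eq_zero_left h2
  -- step 2 : ι (dV (ι ω)) = dV (dH L)
  have hstep2 : ι (dV (ι ω)) = dV (dH L) := by
    have hcomm : ι (dH ω) = dH (ι ω) := by
      have := congrArg (fun f : Module.End R M => f ω) hιdH; simpa using this
    have hdH2' : dH (dH θ) = 0 := by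
      have := congrArg (fun f : Module.End R M => f θ) hdH2; simpa using this
    have hanti : dV (dH L) + dH (dV L) = 0 := by
      have := congrArg (fun f : Module.End R M => f L) hdVdH; simpa using this
    rw [hdVιω, map_neg, hcomm, htriple₂, map_add, hdH2', add_zero]
    exact (eq_neg_of_add_eq_zero_left hanti).symm
  -- step 3 : dV (ι (ι ω)) = 2 • dV (dH L)
  have hstep3 : dV (ι (ι ω)) = 2 • dV (dH L) := by
    have := congrArg (fun f : Module.End R M => f ω) hQQ
    simp only [LinearMap.smul_apply, LinearMap.add_apply, Module.End.mul_apply] at this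
    rw [hdVω, map_zero, map_zero, add_zero] at this
    rw [← this, hstep2]
  have hdVx : dV x = 0 := by
    rw [hxdef, map_sub, map_nsmul, hstep3, sub_self]
  -- step 4 : hV x = 0 since it lives in vertical degree -1
  have hhVx : hV x = 0 := by
    refine iSup_apply_eq_zero (Ω 0) hV (fun q y hy => ?_) hx
    have h := hhVdeg 0 q y hy
    rw [hvan (0 - 1) q (Or.inl (by norm_num))] at h
    simpa using h
  -- step 5 : π₀ x = 0
  have hπx : π₀ x = 0 := by
    rw [hxdef, map_sub, map_nsmul, hπιιω, hπdHL, smul_zero, sub_zero]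
  -- conclude via the homotopy
  have hfin : x = 0 := by
    have := congrArg (fun f : Module.End R M => f x) hVhom
    simp only [LinearMap.add_apply, Module.End.mul_apply, Module.End.one_apply] at this
    rw [hhVx, hdVx, map_zero, map_zero, hπx, add_zero, add_zero] at this
    exact this.symm
  have := sub_eq_zero.mp hfin
  exact this
end

section
/- Multisymplectic repackaging of a lax BV presentation: In the abstract variational bicomplex with contraction, let ω ∈ ⊕_q Ω^{2,q}, L ∈ ⊕_q Ω^{0,q}, θ ∈ ⊕_q Ω^{1,q}, and set λ := L + θ, d := d_V + d_H, ℒ := ι∘d_V − d_V∘ι, and e^{ι}ω := ω + ι ω + (1/2) ι ι ω (note ι ι ι ω = 0 for bidegree reasons). Then: (a) the equation e^{ι}ω = d λ holds if and only if all three of d_V θ = ω, ι ω = d_V L + d_H θ, and (1/2) ι ι ω = d_H L hold; (b) under the triple redefinition (L, θ) ↦ (L + d_H f, θ + d_V f) for f ∈ ⊕_q Ω^{0,q}, the multisymplectic momentum map λ transforms by λ ↦ λ + d f; (c) if the three equations in (a) hold, then (ℒ − d_H) λ = d 𝔇, where 𝔇 := L − ι θ is the Noether Lagrangian. -/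
open Finsupp in
/-- If a family of submodules is independent, and a finitely supported collection of
elements, one from each submodule, sums to zero, then each element is zero. -/
lemma iSupIndep_finsupp_sum_eq_zero' {ι R N : Type*} [Ring R] [AddCommGroup N] [Module R N]
    {p : ι → Submodule R N} (hind : iSupIndep p) (g : ι →₀ N) (hg : ∀ i, g i ∈ p i)
    (hsum : (g.sum fun _ x => x) = 0) (i : ι) : g i = 0 := by
  classical
  set v : Π₀ i, ↥(p i) := DFinsupp.mk g.support fun i => ⟨g i, hg i⟩ with hv
  have hlsum : DFinsupp.lsum ℕ (M := fun i ↦ ↥(p i)) (fun i => (p i).subtype) v = 0 := by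
    rw [DFinsupp.lsum_apply_apply, DFinsupp.sumAddHom_apply]
    rw [← hsum]
    refine Finset.sum_congr ?_ fun j hj => ?_
    · ext j
      simp [hv, DFinsupp.mem_support_iff, DFinsupp.mk_apply, Finsupp.mem_support_iff]
    · simp [hv, DFinsupp.mk_apply, Finsupp.mem_support_iff.mp hj]
  have hv0 : v = 0 := hind.dfinsupp_lsum_injective (by simpa using hlsum)
  by_cases hi : i ∈ g.support
  · have h1 : v i = 0 := by rw [hv0]; rfl
    have h2 : ((v i : N)) = 0 := by rw [h1]; rfl
    simpa [hv, DFinsupp.mk_apply, hi] using h2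
  · simpa using Finsupp.notMem_support_iff.mp hi

/-- Elements of three distinct "rows" of a bigraded decomposition summing to zero
are each zero. -/
lemma three_rows_eq_zero {R M : Type*} [CommRing R] [AddCommGroup M] [Module R M]
    (Ω : ℤ → ℤ → Submodule R M)
    (hind : iSupIndep fun pq : ℤ × ℤ => Ω pq.1 pq.2)
    {x0 x1 x2 : M} (h0 : x0 ∈ ⨆ q : ℤ, Ω 0 q) (h1 : x1 ∈ ⨆ q : ℤ, Ω 1 q)
    (h2 : x2 ∈ ⨆ q : ℤ, Ω 2 q) (hsum : x0 + x1 + x2 = 0) :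
    x0 = 0 ∧ x1 = 0 ∧ x2 = 0 := by
  classical
  obtain ⟨f0, hf0, hs0⟩ := (Submodule.mem_iSup_iff_exists_finsupp _ _).mp h0
  obtain ⟨f1, hf1, hs1⟩ := (Submodule.mem_iSup_iff_exists_finsupp _ _).mp h1
  obtain ⟨f2, hf2, hs2⟩ := (Submodule.mem_iSup_iff_exists_finsupp _ _).mp h2
  set e : ℤ → ℤ ↪ ℤ × ℤ := fun p => ⟨fun q => (p, q), fun a b h => congrArg Prod.snd h⟩ with he
  have heapp : ∀ (p : ℤ) (f : ℤ →₀ M) (q : ℤ), Finsupp.embDomain (e p) f (p, q) = f q :=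
    fun p f q => Finsupp.embDomain_apply_self (e p) f q
  have hene : ∀ (p : ℤ) (f : ℤ →₀ M) (p' q' : ℤ), p' ≠ p →
      Finsupp.embDomain (e p) f (p', q') = 0 := by
    intro p f p' q' hp
    refine Finsupp.embDomain_notin_range _ _ _ ?_
    rintro ⟨a, ha⟩
    exact hp (congrArg Prod.fst ha).symm
  set g : ℤ × ℤ →₀ M :=
    Finsupp.embDomain (e 0) f0 + Finsupp.embDomain (e 1) f1 + Finsupp.embDomain (e 2) f2 with hg
  have hgmem : ∀ pq : ℤ × ℤ, g pq ∈ Ω pq.1 pq.2 := by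
    rintro ⟨p, q⟩
    have hval : g (p, q) = Finsupp.embDomain (e 0) f0 (p, q) + Finsupp.embDomain (e 1) f1 (p, q) +
        Finsupp.embDomain (e 2) f2 (p, q) := rfl
    rw [hval]
    refine add_mem (add_mem ?_ ?_) ?_
    · by_cases hp : p = 0
      · subst hp; rw [heapp]; exact hf0 q
      · rw [hene _ _ _ _ hp]; exact zero_mem _
    · by_cases hp : p = 1
      · subst hp; rw [heapp]; exact hf1 q
      · rw [hene _ _ _ _ hp]; exact zero_mem _
    · by_cases hp : p = 2
      · subst hp; rw [heapp]; exact hf2 q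
      · rw [hene _ _ _ _ hp]; exact zero_mem _
  have hsum' : (g.sum fun _ x => x) = 0 := by
    rw [hg]
    rw [Finsupp.sum_add_index' (fun _ => rfl) (fun _ _ _ => rfl),
        Finsupp.sum_add_index' (fun _ => rfl) (fun _ _ _ => rfl)]
    simp only [Finsupp.embDomain_eq_mapDomain]
    rw [Finsupp.sum_mapDomain_index (fun _ => rfl) (fun _ _ _ => rfl),
        Finsupp.sum_mapDomain_index (fun _ => rfl) (fun _ _ _ => rfl),
        Finsupp.sum_mapDomain_index (fun _ => rfl) (fun _ _ _ => rfl)]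
    rw [hs0, hs1, hs2, hsum]
  have hzero := iSupIndep_finsupp_sum_eq_zero' hind g hgmem hsum'
  have hf0z : f0 = 0 := by
    ext q
    have hz := hzero (0, q)
    rw [hg] at hz
    simpa [heapp, hene 1 f1 0 q (by decide), hene 2 f2 0 q (by decide)] using hz
  have hf1z : f1 = 0 := by
    ext q
    have hz := hzero (1, q)
    rw [hg] at hz
    simpa [heapp, hene 0 f0 1 q (by decide), hene 2 f2 1 q (by decide)] using hz
  have hf2z : f2 = 0 := by
    ext q
    have hz := hzero (2, q)
    rw [hg] at hz
    simpa [heapp, hene 0 f0 2 q (by decide), hene 1 f1 2 q (by decide)] using hz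
  refine ⟨?_, ?_, ?_⟩
  · rw [← hs0, hf0z]; simp
  · rw [← hs1, hf1z]; simp
  · rw [← hs2, hf2z]; simp



/-- **Multisymplectic repackaging of a lax BV presentation**: with `λ := L + θ`,
`d := d_V + d_H`, `ℒ := ι∘d_V − d_V∘ι` and `e^{ι}ω := ω + ι ω + (1/2) ι ι ω`:
(a) `e^{ι}ω = d λ` iff `d_V θ = ω`, `ι ω = d_V L + d_H θ` and `(1/2) ι ι ω = d_H L`;
(b) under the triple redefinition `(L, θ) ↦ (L + d_H f, θ + d_V f)` the momentum map
transforms by `λ ↦ λ + d f`; (c) if the three equations of (a) hold then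
`(ℒ − d_H) λ = d 𝔇` where `𝔇 := L − ι θ` is the Noether Lagrangian. -/
theorem multisymplectic_repackaging
    {R M : Type*} [CommRing R] [Invertible (2 : R)] [AddCommGroup M] [Module R M]
    -- the abstract variational bicomplex
    (n : ℤ) (Ω : ℤ → ℤ → Submodule R M)
    (hint : DirectSum.IsInternal fun pq : ℤ × ℤ => Ω pq.1 pq.2)
    (hvan : ∀ p q : ℤ, (p < 0 ∨ q < 0 ∨ n < q) → Ω p q = ⊥)
    (dV dH : Module.End R M)
    (hdVdeg : ∀ p q : ℤ, ∀ x ∈ Ω p q, dV x ∈ Ω (p + 1) q)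
    (hdHdeg : ∀ p q : ℤ, ∀ x ∈ Ω p q, dH x ∈ Ω p (q + 1))
    (hdV2 : dV * dV = 0) (hdH2 : dH * dH = 0)
    (hdVdH : dV * dH + dH * dV = 0)
    -- the contraction operator ι
    (ι : Module.End R M)
    (hιdeg : ∀ p q : ℤ, ∀ x ∈ Ω p q, ι x ∈ Ω (p - 1) q)
    (hιdH : ι * dH = dH * ι)
    -- the data ω, L, θ
    (ω L θ : M)
    (hω : ω ∈ ⨆ q : ℤ, Ω 2 q) (hL : L ∈ ⨆ q : ℤ, Ω 0 q) (hθ : θ ∈ ⨆ q : ℤ, Ω 1 q) :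
    (let lam : M := L + θ
     let lie : Module.End R M := ι * dV - dV * ι
     let 𝔇 : M := L - ι θ
     -- (a)
     ((ω + ι ω + (⅟2 : R) • ι (ι ω) = dV lam + dH lam) ↔
       (dV θ = ω ∧ ι ω = dV L + dH θ ∧ (⅟2 : R) • ι (ι ω) = dH L)) ∧
     -- (b) triple redefinition transforms λ by λ ↦ λ + d f
     (∀ f ∈ (⨆ q : ℤ, Ω 0 q : Submodule R M),
       (L + dH f) + (θ + dV f) = lam + (dV f + dH f)) ∧
     -- (c)
     ((dV θ = ω ∧ ι ω = dV L + dH θ ∧ (⅟2 : R) • ι (ι ω) = dH L) →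
       lie lam - dH lam = dV 𝔇 + dH 𝔇)) := by
  have hind : iSupIndep fun pq : ℤ × ℤ => Ω pq.1 pq.2 := hint.submodule_iSupIndep
  set P : ℤ → Submodule R M := fun p => ⨆ q : ℤ, Ω p q with hP
  have hmap : ∀ (T : Module.End R M) (p p' : ℤ), (∀ q : ℤ, ∀ x ∈ Ω p q, T x ∈ P p') →
      ∀ x ∈ P p, T x ∈ P p' := by
    intro T p p' hT x hx
    have hle : P p ≤ Submodule.comap T (P p') :=
      iSup_le fun q y hy => Submodule.mem_comap.mpr (hT q y hy)
    exact hle hx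
  -- basic membership facts
  have hιω : ι ω ∈ P 1 := by
    refine hmap ι 2 1 (fun q x hx => ?_) ω hω
    have h := hιdeg 2 q x hx
    norm_num at h
    exact Submodule.mem_iSup_of_mem q h
  have hιιω : ι (ι ω) ∈ P 0 := by
    refine hmap ι 1 0 (fun q x hx => ?_) (ι ω) hιω
    have h := hιdeg 1 q x hx
    norm_num at h
    exact Submodule.mem_iSup_of_mem q h
  have hdVθ : dV θ ∈ P 2 := by
    refine hmap dV 1 2 (fun q x hx => ?_) θ hθ
    have h := hdVdeg 1 q x hx
    norm_num at h
    exact Submodule.mem_iSup_of_mem q h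
  have hdVL : dV L ∈ P 1 := by
    refine hmap dV 0 1 (fun q x hx => ?_) L hL
    have h := hdVdeg 0 q x hx
    norm_num at h
    exact Submodule.mem_iSup_of_mem q h
  have hdHθ : dH θ ∈ P 1 :=
    hmap dH 1 1 (fun q x hx => Submodule.mem_iSup_of_mem (q + 1) (hdHdeg 1 q x hx)) θ hθ
  have hdHL : dH L ∈ P 0 :=
    hmap dH 0 0 (fun q x hx => Submodule.mem_iSup_of_mem (q + 1) (hdHdeg 0 q x hx)) L hL
  have hPneg : P (-1) = ⊥ := by
    rw [hP]
    simp only [iSup_eq_bot]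
    exact fun q => hvan (-1) q (Or.inl (by norm_num))
  have hιL : ι L = 0 := by
    have h : ι L ∈ P (-1) := by
      refine hmap ι 0 (-1) (fun q x hx => ?_) L hL
      have h := hιdeg 0 q x hx
      norm_num at h
      exact Submodule.mem_iSup_of_mem q h
    rw [hPneg] at h
    exact (Submodule.mem_bot R).mp h
  have hιdHθ : ι (dH θ) = dH (ι θ) := by
    have := DFunLike.congr_fun hιdH θ
    simpa [Module.End.mul_apply] using this
  refine ⟨⟨fun h => ?_, fun h => ?_⟩, fun f hf => ?_, fun h => ?_⟩
  · -- (a) forward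
    have hz0 : (dH L - (⅟2 : R) • ι (ι ω)) + (dV L + dH θ - ι ω) + (dV θ - ω) = 0 := by
      have e : (dH L - (⅟2 : R) • ι (ι ω)) + (dV L + dH θ - ι ω) + (dV θ - ω)
          = (dV L + dV θ + (dH L + dH θ)) - (ω + ι ω + (⅟2 : R) • ι (ι ω)) := by abel
      rw [e, sub_eq_zero]
      rw [map_add, map_add] at h
      exact h.symm
    obtain ⟨e0, e1, e2⟩ := three_rows_eq_zero Ω hind
      (sub_mem hdHL (Submodule.smul_mem _ _ hιιω))
      (sub_mem (add_mem hdVL hdHθ) hιω)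
      (sub_mem hdVθ hω) hz0
    exact ⟨sub_eq_zero.mp e2, (sub_eq_zero.mp e1).symm, (sub_eq_zero.mp e0).symm⟩
  · -- (a) backward
    obtain ⟨h1, h2, h3⟩ := h
    rw [map_add, map_add, h3, h2, ← h1]
    abel
  · -- (b)
    abel
  · -- (c)
    obtain ⟨h1, h2, h3⟩ := h
    have h3' : ι (ι ω) = dH L + dH L := by
      rw [← two_smul R (dH L), ← h3, smul_smul, mul_invOf_self, one_smul]
    have h2' : ι (ι ω) = ι (dV L) + dH (ι θ) := by
      rw [h2, map_add, hιdHθ]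
    have key : ι (dV L) = dH L + dH L - dH (ι θ) := by
      rw [← h3', h2']; abel
    simp only [LinearMap.sub_apply, Module.End.mul_apply, map_add, map_sub]
    rw [hιL, map_zero, h1, h2, key]
    abel
end

section
/- Twisted primitive of the symplectic development: In the abstract variational bicomplex with contraction satisfying 2ι∘d_V∘ι = d_V∘ι∘ι + ι∘ι∘d_V, let ω ∈ ⊕_q Ω^{2,q}, L ∈ ⊕_q Ω^{0,q}, θ ∈ ⊕_q Ω^{1,q} satisfy the lax BV presentation equations: d_V θ = ω, ι ω = d_V L + d_H θ, and ι ι ω = 2 d_H L. Then, with d := d_V + d_H, ℒ := ι∘d_V − d_V∘ι, and Noether Lagrangian 𝔇 := L − ι θ, one has ω = (d − ℒ)(𝔇 + θ); that is, 𝔇 + θ = e^{−ι}λ (with λ = L + θ) is a primitive of ω for the twisted differential d − ℒ. -/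
private lemma half_cancel {R M : Type*} [CommRing R] [Invertible (2 : R)]
    [AddCommGroup M] [Module R M] {a b : M} (h : 2 • a = 2 • b) : a = b := by
  have h' : (2 : R) • a = (2 : R) • b := by
    have ha := Nat.cast_smul_eq_nsmul R 2 a
    have hb := Nat.cast_smul_eq_nsmul R 2 b
    push_cast at ha hb
    rw [ha, hb]; exact_mod_cast h
  calc a = ⅟(2:R) • ((2:R) • a) := (invOf_smul_smul _ _).symm
    _ = ⅟(2:R) • ((2:R) • b) := by rw [h']
    _ = b := invOf_smul_smul _ _

private lemma iota_vanish {R M : Type*} [CommRing R] [AddCommGroup M] [Module R M]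
    (n : ℤ) (Ω : ℤ → ℤ → Submodule R M)
    (hvan : ∀ p q : ℤ, (p < 0 ∨ q < 0 ∨ n < q) → Ω p q = ⊥)
    (ι : Module.End R M)
    (hιdeg : ∀ p q : ℤ, ∀ x ∈ Ω p q, ι x ∈ Ω (p - 1) q)
    {x : M} (hx : x ∈ ⨆ q : ℤ, Ω 0 q) : ι x = 0 := by
  have hmem : ι x ∈ (⨆ q : ℤ, Ω 0 q).map ι := Submodule.mem_map_of_mem hx
  rw [Submodule.map_iSup] at hmem
  have hle : (⨆ q : ℤ, (Ω 0 q).map ι) ≤ ⊥ := by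
    refine iSup_le fun q => ?_
    intro y hy
    obtain ⟨z, hz, rfl⟩ := hy
    have := hιdeg 0 q z hz
    rwa [hvan (0 - 1) q (Or.inl (by norm_num))] at this
  simpa using hle hmem

/-- **Twisted primitive of the symplectic development**: if `(ω, L, θ)` satisfies the lax
BV presentation equations `d_V θ = ω`, `ι ω = d_V L + d_H θ`, `ι ι ω = 2 d_H L`, then with
`d := d_V + d_H`, `ℒ := ι∘d_V − d_V∘ι` and Noether Lagrangian `𝔇 := L − ι θ`, one has
`ω = (d − ℒ)(𝔇 + θ)`. -/
theorem twisted_primitive_of_symplectic_development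
    {R M : Type*} [CommRing R] [Invertible (2 : R)] [AddCommGroup M] [Module R M]
    -- the abstract variational bicomplex
    (n : ℤ) (Ω : ℤ → ℤ → Submodule R M)
    (hint : DirectSum.IsInternal fun pq : ℤ × ℤ => Ω pq.1 pq.2)
    (hvan : ∀ p q : ℤ, (p < 0 ∨ q < 0 ∨ n < q) → Ω p q = ⊥)
    (dV dH : Module.End R M)
    (hdVdeg : ∀ p q : ℤ, ∀ x ∈ Ω p q, dV x ∈ Ω (p + 1) q)
    (hdHdeg : ∀ p q : ℤ, ∀ x ∈ Ω p q, dH x ∈ Ω p (q + 1))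
    (hdV2 : dV * dV = 0) (hdH2 : dH * dH = 0)
    (hdVdH : dV * dH + dH * dV = 0)
    -- the contraction operator ι
    (ι : Module.End R M)
    (hιdeg : ∀ p q : ℤ, ∀ x ∈ Ω p q, ι x ∈ Ω (p - 1) q)
    (hιdH : ι * dH = dH * ι)
    (hQQ : 2 • (ι * dV * ι) = dV * ι * ι + ι * ι * dV)
    -- the data ω, L, θ and the lax BV presentation equations
    (ω L θ : M)
    (hω : ω ∈ ⨆ q : ℤ, Ω 2 q) (hL : L ∈ ⨆ q : ℤ, Ω 0 q) (hθ : θ ∈ ⨆ q : ℤ, Ω 1 q)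
    (hbv₁ : dV θ = ω) (hbv₂ : ι ω = dV L + dH θ) (hbv₃ : ι (ι ω) = 2 • dH L) :
    (let lie : Module.End R M := ι * dV - dV * ι
     let 𝔇 : M := L - ι θ
     ω = (dV (𝔇 + θ) + dH (𝔇 + θ)) - lie (𝔇 + θ)) := by
  intro lie 𝔇
  -- ι L = 0
  have hιL : ι L = 0 := iota_vanish n Ω hvan ι hιdeg hL
  -- ι θ has vertical degree 0, hence ι (ι θ) = 0
  have hιθmem : ι θ ∈ ⨆ q : ℤ, Ω 0 q := by
    have hmem : ι θ ∈ (⨆ q : ℤ, Ω 1 q).map ι := Submodule.mem_map_of_mem hθ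
    rw [Submodule.map_iSup] at hmem
    refine (iSup_le fun q => ?_ : (⨆ q : ℤ, (Ω 1 q).map ι) ≤ ⨆ q : ℤ, Ω 0 q) hmem
    refine le_trans ?_ (le_iSup _ q)
    intro y hy
    obtain ⟨z, hz, rfl⟩ := hy
    simpa using hιdeg 1 q z hz
  have hιιθ : ι (ι θ) = 0 := iota_vanish n Ω hvan ι hιdeg hιθmem
  -- ι (dV (ι θ)) = dH L
  have h3 : ι (dV (ι θ)) = dH L := by
    apply half_cancel (R := R)
    have := congrArg (fun f : Module.End R M => f θ) hQQ
    simp only [LinearMap.smul_apply, LinearMap.add_apply, Module.End.mul_apply] at this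
    rw [hιιθ, map_zero, hbv₁, hbv₃, zero_add] at this
    exact this
  -- ι (dV L) = 2 • dH L - dH (ι θ)
  have h2 : ι (dV L) = 2 • dH L - dH (ι θ) := by
    have h := congrArg ι hbv₂
    rw [hbv₃, map_add] at h
    have hcomm : ι (dH θ) = dH (ι θ) := congrArg (fun f : Module.End R M => f θ) hιdH
    rw [hcomm] at h
    rw [h]; abel
  -- expand the goal
  show ω = (dV (𝔇 + θ) + dH (𝔇 + θ)) - (ι (dV (𝔇 + θ)) - dV (ι (𝔇 + θ)))
  have h𝔇 : 𝔇 = L - ι θ := rfl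
  rw [h𝔇]
  simp only [map_add, map_sub]
  rw [hιL, hιιθ, hbv₁, h2, h3, hbv₂]
  abel
end
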